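/- arXiv:2302.00232 — 3 statements merged into one kernel-verified Lean document; each statement's English description precedes it below -/
import Mathlib

section
/- Let n be a positive integer, V_u > 0 and V_u^b > 0 real numbers, A an n×n real matrix, g ∈ ℝ^n, and (e[t])_{t≥1} a bounded sequence of vectors in ℝ^n. Define the sequence β[t] ∈ ℝ^n by β[0] = 0 and β[t+1] = φ((1/V_u^b)·((t/(t+1))·(1/V_u)·A·β[t] + g)) − (1/V_u^b)·e[t+1]/(t+1) for all t ≥ 0. If there exists γ < 1 such that ‖A‖₂ ≤ γ·V_u·V_u^b, then the sequence β[t] converges to a limit β* ∈ ℝ^n, and this limit satisfies the fixed-point equation β* = φ((1/V_u^b)·((1/V_u)·A·β* + g)). -/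
open Filter Topology

/-- Euclidean norm of a vector in `ℝ^n`. -/
noncomputable def l2norm {n : ℕ} (x : Fin n → ℝ) : ℝ := Real.sqrt (∑ i, (x i) ^ 2)

/-- Operator norm of a matrix with respect to Euclidean norms, `‖A‖₂`. -/
noncomputable def l2OpNorm {m n : ℕ} (A : Matrix (Fin m) (Fin n) ℝ) : ℝ :=
  sInf {c : ℝ | 0 ≤ c ∧ ∀ x : Fin n → ℝ, l2norm (A.mulVec x) ≤ c * l2norm x}

/-- Coordinatewise clamp `φ(x)_i = min(1, max(−1, x_i))`. -/
noncomputable def clamp1 {n : ℕ} (x : Fin n → ℝ) : Fin n → ℝ := fun i => min 1 (max (-1) (x i))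

/-!
`φ` is 1-Lipschitz for the Euclidean norm, so `‖A‖₂ ≤ γ V_u V_u^b` makes the limit map
`x ↦ φ((1/V_u^b)((1/V_u) A x + g))` a contraction with constant `q = max γ 0 < 1`; by Banach's
theorem it has a fixed point `β*`. Replacing the factor `t/(t+1)` by `1` and dropping the residual
`e[t+1]/(t+1)` each cost `O(1/(t+1))`, so `d t = ‖β[t] - β*‖` obeys
`d (t+1) ≤ q d t + M/(t+1)`, and a geometric recursion with vanishing forcing tends to `0`.
-/

section EuclideanNorm

variable {n : ℕ}

theorem l2norm_eq_norm_toLp (x : Fin n → ℝ) : l2norm x = ‖WithLp.toLp 2 x‖ := by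
  simp [l2norm, EuclideanSpace.norm_eq]

theorem l2norm_nonneg (x : Fin n → ℝ) : 0 ≤ l2norm x := Real.sqrt_nonneg _

theorem l2norm_sub_le (x y : Fin n → ℝ) : l2norm (x - y) ≤ l2norm x + l2norm y := by
  simpa only [l2norm_eq_norm_toLp, WithLp.toLp_sub] using norm_sub_le _ _

theorem l2norm_smul (c : ℝ) (x : Fin n → ℝ) : l2norm (c • x) = |c| * l2norm x := by
  simp only [l2norm_eq_norm_toLp, WithLp.toLp_smul, norm_smul, Real.norm_eq_abs]

theorem l2OpNorm_eq_norm_toEuclideanCLM (A : Matrix (Fin n) (Fin n) ℝ) :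
    l2OpNorm A = ‖Matrix.toEuclideanCLM (𝕜 := ℝ) A‖ := by
  rw [ContinuousLinearMap.norm_def, l2OpNorm]
  congr! 4 with c
  simp only [l2norm_eq_norm_toLp, ← Matrix.toEuclideanCLM_toLp]
  exact (WithLp.equiv 2 (Fin n → ℝ)).symm.forall_congr_left

theorem l2norm_mulVec_le (A : Matrix (Fin n) (Fin n) ℝ) (x : Fin n → ℝ) :
    l2norm (A.mulVec x) ≤ l2OpNorm A * l2norm x := by
  simpa only [l2OpNorm_eq_norm_toEuclideanCLM, l2norm_eq_norm_toLp, Matrix.toEuclideanCLM_toLp]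
    using (Matrix.toEuclideanCLM (𝕜 := ℝ) A).le_opNorm (WithLp.toLp 2 x)

theorem abs_clamp1_sub_le (x y : Fin n → ℝ) (i : Fin n) :
    |clamp1 x i - clamp1 y i| ≤ |x i - y i| :=
  calc |clamp1 x i - clamp1 y i| ≤ max |1 - 1| |max (-1) (x i) - max (-1) (y i)| :=
        abs_min_sub_min_le_max _ _ _ _
    _ = |max (-1) (x i) - max (-1) (y i)| := by simp
    _ ≤ |x i - y i| := by
        simpa [max_comm (-1 : ℝ)] using abs_max_sub_max_le_abs (x i) (y i) (-1)

theorem l2norm_clamp1_sub_le (x y : Fin n → ℝ) :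
    l2norm (clamp1 x - clamp1 y) ≤ l2norm (x - y) := by
  refine Real.sqrt_le_sqrt (Finset.sum_le_sum fun i _ => ?_)
  simpa only [Pi.sub_apply, sq_abs] using
    pow_le_pow_left₀ (abs_nonneg _) (abs_clamp1_sub_le x y i) 2

theorem tendsto_of_l2norm_sub_tendsto_zero {x : ℕ → Fin n → ℝ} {y : Fin n → ℝ}
    (h : Tendsto (fun t => l2norm (x t - y)) atTop (𝓝 0)) : Tendsto x atTop (𝓝 y) := by
  have h' : Tendsto (fun t => WithLp.toLp 2 (x t)) atTop (𝓝 (WithLp.toLp 2 y)) := by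
    rw [tendsto_iff_norm_sub_tendsto_zero]
    convert h using 2 with t
    rw [l2norm_eq_norm_toLp, WithLp.toLp_sub]
  exact ((PiLp.continuous_ofLp 2 _).tendsto _).comp h'

end EuclideanNorm

theorem tendsto_zero_of_le_mul_add {q : ℝ} (hq0 : 0 ≤ q) (hq1 : q < 1) {d u : ℕ → ℝ}
    (hd : ∀ t, 0 ≤ d t) (hrec : ∀ t, d (t + 1) ≤ q * d t + u t)
    (hu : Tendsto u atTop (𝓝 0)) : Tendsto d atTop (𝓝 0) := by
  refine tendsto_order.2 ⟨fun a ha => .of_forall fun t => ha.trans_le (hd t), fun a ha => ?_⟩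
  obtain ⟨ε, hε, rfl⟩ : ∃ ε, 0 < ε ∧ a = 2 * ε := ⟨a / 2, half_pos ha, by ring⟩
  obtain ⟨T, hT⟩ := eventually_atTop.1 <|
    hu.eventually (gt_mem_nhds (mul_pos (sub_pos.2 hq1) hε))
  -- once `u < (1 - q) ε`, the excess `d - ε` contracts by the factor `q`
  have hgeom : ∀ t, T ≤ t → d t - ε ≤ q ^ (t - T) * (d T - ε) := by
    intro t ht
    induction t, ht using Nat.le_induction with
    | base => simp
    | succ t ht ih =>
      rw [Nat.sub_add_comm ht, pow_succ', mul_assoc]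
      linarith [hrec t, hT t ht, mul_le_mul_of_nonneg_left ih hq0]
  have hlim : Tendsto (fun t => q ^ (t - T) * (d T - ε)) atTop (𝓝 0) := by
    simpa using ((tendsto_pow_atTop_nhds_zero_of_lt_one hq0 hq1).comp
      (tendsto_sub_atTop_nat T)).mul_const (d T - ε)
  filter_upwards [eventually_ge_atTop T, hlim.eventually (gt_mem_nhds hε)]
    with t ht hsmall
  linarith [hgeom t ht]

section BackwardStep

variable {n : ℕ} (Vu Vub : ℝ) (A : Matrix (Fin n) (Fin n) ℝ) (g : Fin n → ℝ)

/-- The recursion uses `r = t/(t+1)`, the fixed-point equation `r = 1`. -/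
noncomputable def backwardStep (r : ℝ) (x : Fin n → ℝ) : Fin n → ℝ :=
  clamp1 ((1 / Vub) • (r • ((1 / Vu) • A.mulVec x) + g))

variable {Vu Vub A}

theorem l2norm_backwardStep_sub_le (hVu : 0 < Vu) (hVub : 0 < Vub) {q : ℝ}
    (hA : l2OpNorm A ≤ q * Vu * Vub) {r : ℝ} (hr0 : 0 ≤ r) (hr1 : r ≤ 1) (x y : Fin n → ℝ) :
    l2norm (backwardStep Vu Vub A g r x - backwardStep Vu Vub A g 1 y) ≤
      q * l2norm (x - y) + (1 - r) * (l2norm (A.mulVec y) / (Vu * Vub)) := by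
  have hVV : 0 < Vu * Vub := mul_pos hVu hVub
  have hAxy := (l2norm_mulVec_le A (x - y)).trans
    (mul_le_mul_of_nonneg_right hA (l2norm_nonneg _))
  calc l2norm (backwardStep Vu Vub A g r x - backwardStep Vu Vub A g 1 y)
      ≤ l2norm ((1 / (Vu * Vub)) • (r • A.mulVec (x - y) - (1 - r) • A.mulVec y)) := by
        refine (l2norm_clamp1_sub_le _ _).trans_eq (congrArg l2norm ?_)
        rw [Matrix.mulVec_sub]
        field_simp
        module
    _ ≤ (r * l2norm (A.mulVec (x - y)) + (1 - r) * l2norm (A.mulVec y)) / (Vu * Vub) := by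
        rw [l2norm_smul, abs_of_pos (one_div_pos.2 hVV), one_div_mul_eq_div]
        gcongr
        refine (l2norm_sub_le _ _).trans_eq ?_
        rw [l2norm_smul, l2norm_smul, abs_of_nonneg hr0, abs_of_nonneg (sub_nonneg.2 hr1)]
    _ ≤ q * l2norm (x - y) + (1 - r) * (l2norm (A.mulVec y) / (Vu * Vub)) := by
        rw [add_div, mul_div_assoc (1 - r)]
        gcongr ?_ + _
        rw [div_le_iff₀ hVV]
        calc r * l2norm (A.mulVec (x - y)) ≤ l2norm (A.mulVec (x - y)) :=
              mul_le_of_le_one_left (l2norm_nonneg _) hr1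
          _ ≤ q * l2norm (x - y) * (Vu * Vub) := by linarith

theorem exists_backwardStep_one_eq (hVu : 0 < Vu) (hVub : 0 < Vub) {q : ℝ} (hq0 : 0 ≤ q)
    (hq1 : q < 1) (hA : l2OpNorm A ≤ q * Vu * Vub) :
    ∃ x, backwardStep Vu Vub A g 1 x = x := by
  let f (x : EuclideanSpace ℝ (Fin n)) := WithLp.toLp 2 (backwardStep Vu Vub A g 1 x.ofLp)
  have hf : ContractingWith ⟨q, hq0⟩ f := by
    have hdist (x y : EuclideanSpace ℝ (Fin n)) : dist x y = l2norm (x.ofLp - y.ofLp) := by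
      rw [dist_eq_norm, l2norm_eq_norm_toLp]
      rfl
    refine ⟨hq1, LipschitzWith.of_dist_le_mul fun x y => ?_⟩
    rw [hdist, hdist]
    refine (l2norm_backwardStep_sub_le g hVu hVub hA zero_le_one le_rfl _ _).trans_eq ?_
    rw [sub_self, zero_mul, add_zero]
    rfl
  exact ⟨_, congrArg WithLp.ofLp hf.fixedPoint_isFixedPt⟩

theorem l2norm_sub_fixedPoint_succ_le (hVu : 0 < Vu) (hVub : 0 < Vub) {q C : ℝ}
    (hA : l2OpNorm A ≤ q * Vu * Vub) {e β : ℕ → Fin n → ℝ}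
    (hC : ∀ t : ℕ, 1 ≤ t → l2norm (e t) ≤ C)
    (hβ : ∀ t : ℕ, β (t + 1) = backwardStep Vu Vub A g ((t : ℝ) / ((t : ℝ) + 1)) (β t)
        - (1 / Vub) • ((1 / ((t : ℝ) + 1)) • e (t + 1)))
    {x : Fin n → ℝ} (hx : backwardStep Vu Vub A g 1 x = x) (t : ℕ) :
    l2norm (β (t + 1) - x) ≤ q * l2norm (β t - x)
      + 1 / ((t : ℝ) + 1) * (l2norm (A.mulVec x) / (Vu * Vub) + C / Vub) := by
  have ht : (0 : ℝ) < t + 1 := t.cast_add_one_pos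
  have hr0 : 0 ≤ (t : ℝ) / (t + 1) := by positivity
  have hr1 : (t : ℝ) / (t + 1) ≤ 1 := (div_le_one ht).2 (by linarith)
  have hr : 1 - (t : ℝ) / (t + 1) = 1 / (t + 1) := by field_simp; ring
  have herr :
      l2norm ((1 / Vub) • ((1 / ((t : ℝ) + 1)) • e (t + 1))) ≤ 1 / (t + 1) * (C / Vub) := by
    rw [l2norm_smul, l2norm_smul, abs_of_pos (one_div_pos.2 hVub), abs_of_pos (one_div_pos.2 ht)]
    calc 1 / Vub * (1 / (t + 1) * l2norm (e (t + 1))) ≤ 1 / Vub * (1 / (t + 1) * C) := by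
          gcongr
          exact hC (t + 1) le_add_self
      _ = 1 / (t + 1) * (C / Vub) := by ring
  calc l2norm (β (t + 1) - x)
      = l2norm ((backwardStep Vu Vub A g ((t : ℝ) / ((t : ℝ) + 1)) (β t)
          - backwardStep Vu Vub A g 1 x) - (1 / Vub) • ((1 / ((t : ℝ) + 1)) • e (t + 1))) := by
        conv_lhs => rw [hβ t, ← hx]
        rw [sub_right_comm]
    _ ≤ (q * l2norm (β t - x) + (1 - (t : ℝ) / (t + 1)) * (l2norm (A.mulVec x) / (Vu * Vub)))
          + 1 / (t + 1) * (C / Vub) :=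
        (l2norm_sub_le _ _).trans
          (add_le_add (l2norm_backwardStep_sub_le g hVu hVub hA hr0 hr1 _ _) herr)
    _ = q * l2norm (β t - x)
          + 1 / ((t : ℝ) + 1) * (l2norm (A.mulVec x) / (Vu * Vub) + C / Vub) := by
        rw [hr]
        ring

end BackwardStep

theorem stmt0_general (n : ℕ) (Vu Vub : ℝ) (hVu : 0 < Vu) (hVub : 0 < Vub)
    (A : Matrix (Fin n) (Fin n) ℝ) (g : Fin n → ℝ) (e : ℕ → Fin n → ℝ)
    (he : ∃ C : ℝ, ∀ t : ℕ, 1 ≤ t → l2norm (e t) ≤ C)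
    (β : ℕ → Fin n → ℝ)
    (hβ : ∀ t : ℕ, β (t + 1) =
      clamp1 ((1 / Vub) • (((t : ℝ) / ((t : ℝ) + 1)) • ((1 / Vu) • A.mulVec (β t)) + g))
        - (1 / Vub) • ((1 / ((t : ℝ) + 1)) • e (t + 1)))
    (hA : ∃ γ : ℝ, γ < 1 ∧ l2OpNorm A ≤ γ * Vu * Vub) :
    ∃ βstar : Fin n → ℝ, Tendsto β atTop (𝓝 βstar) ∧
      βstar = clamp1 ((1 / Vub) • ((1 / Vu) • A.mulVec βstar + g)) := by
  obtain ⟨C, hC⟩ := he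
  obtain ⟨γ, hγ, hAγ⟩ := hA
  have hq0 : 0 ≤ max γ 0 := le_max_right γ 0
  have hq1 : max γ 0 < 1 := max_lt hγ one_pos
  have hAq : l2OpNorm A ≤ max γ 0 * Vu * Vub := hAγ.trans (by gcongr; exact le_max_left γ 0)
  obtain ⟨x, hx⟩ := exists_backwardStep_one_eq g hVu hVub hq0 hq1 hAq
  refine ⟨x, ?_, by simpa only [backwardStep, one_smul] using hx.symm⟩
  refine tendsto_of_l2norm_sub_tendsto_zero <| tendsto_zero_of_le_mul_add hq0 hq1
    (fun t => l2norm_nonneg _) (l2norm_sub_fixedPoint_succ_le g hVu hVub hAq hC hβ hx) ?_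
  simpa using (tendsto_one_div_add_atTop_nhds_zero_nat (𝕜 := ℝ)).mul_const _

theorem stmt0 (n : ℕ) (hn : 0 < n) (Vu Vub : ℝ) (hVu : 0 < Vu) (hVub : 0 < Vub)
    (A : Matrix (Fin n) (Fin n) ℝ) (g : Fin n → ℝ) (e : ℕ → Fin n → ℝ)
    (he : ∃ C : ℝ, ∀ t : ℕ, 1 ≤ t → l2norm (e t) ≤ C)
    (β : ℕ → Fin n → ℝ) (hβ0 : β 0 = 0)
    (hβ : ∀ t : ℕ, β (t + 1) =
      clamp1 ((1 / Vub) • (((t : ℝ) / ((t : ℝ) + 1)) • ((1 / Vu) • A.mulVec (β t)) + g))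
        - (1 / Vub) • ((1 / ((t : ℝ) + 1)) • e (t + 1)))
    (hA : ∃ γ : ℝ, γ < 1 ∧ l2OpNorm A ≤ γ * Vu * Vub) :
    ∃ βstar : Fin n → ℝ, Tendsto β atTop (𝓝 βstar) ∧
      βstar = clamp1 ((1 / Vub) • ((1 / Vu) • A.mulVec βstar + g)) :=
  stmt0_general n Vu Vub hVu hVub A g e he β hβ hA
end

section
/- Let n be a positive integer, V_u > 0 a real number, A an n×n real matrix, g ∈ ℝ^n, and (e[t])_{t≥1} a bounded sequence of vectors in ℝ^n. Define β[0] = 0 and β[t+1] = φ((t/(t+1))·(1/V_u)·A·β[t] + g) − e[t+1]/(t+1) for all t ≥ 0. Suppose there exists γ < 1 with ‖A‖₂ ≤ γ·V_u (so that β[t] converges to a limit β* satisfying β* = φ((1/V_u)·A·β* + g)), and suppose additionally there exists λ < 1 such that ‖A‖_∞ ≤ λ·V_u and ‖g‖_∞ ≤ 1 − λ. Then β* satisfies β* = (1/V_u)·A·β* + g; that is, β* is the unique solution of the linear system ((1/V_u)·A − I)·β + g = 0. -/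
open Filter Topology

/-- Sup norm `‖x‖_∞ = max_i |x_i|`. -/
noncomputable def supNorm {n : ℕ} (x : Fin n → ℝ) : ℝ := ⨆ i, |x i|

/-- Operator norm of a matrix with respect to sup norms, `‖A‖_∞`. -/
noncomputable def supOpNorm {m n : ℕ} (A : Matrix (Fin m) (Fin n) ℝ) : ℝ :=
  sInf {c : ℝ | 0 ≤ c ∧ ∀ x : Fin n → ℝ, supNorm (A.mulVec x) ≤ c * supNorm x}

/-!
The hypothesis `‖A‖_∞ ≤ λ V_u` makes `x ↦ φ(A x / V_u + g)` a `λ`-contraction for the sup norm,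
since `φ` is `1`-Lipschitz; let `β*` be its fixed point. One step of the recursion then gives
`‖β[t+1] - β*‖ ≤ λ ‖β[t] - β*‖ + O(1/t)`, which forces `β[t] → β*`. As `‖β*‖_∞ ≤ 1`, we get
`‖A β* / V_u + g‖_∞ ≤ λ + (1 - λ) = 1`, so the clamp is inactive at `β*`; the affine map
`y ↦ A y / V_u + g` is itself a `λ`-contraction, whence uniqueness.
-/

open scoped NNReal

section Norms

variable {n : ℕ}

theorem supNorm_eq_norm (x : Fin n → ℝ) : supNorm x = ‖x‖ := by
  rcases isEmpty_or_nonempty (Fin n) with _ | _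
  · rw [supNorm, Real.iSup_of_isEmpty, Subsingleton.elim x 0, norm_zero]
  have hbdd : BddAbove (Set.range fun i => |x i|) := (Set.finite_range _).bddAbove
  apply le_antisymm
  · exact ciSup_le fun i => norm_le_pi_norm x i
  · refine (pi_norm_le_iff_of_nonneg ?_).2 fun i => le_ciSup hbdd i
    exact (abs_nonneg _).trans (le_ciSup hbdd (Classical.arbitrary _))

theorem supOpNorm_eq_opNorm (A : Matrix (Fin n) (Fin n) ℝ) :
    supOpNorm A = ‖LinearMap.toContinuousLinearMap (Matrix.toLin' A)‖ := by
  simp only [supOpNorm, supNorm_eq_norm, ContinuousLinearMap.norm_def]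
  rfl

theorem norm_mulVec_le_supOpNorm_mul (A : Matrix (Fin n) (Fin n) ℝ) (x : Fin n → ℝ) :
    ‖A.mulVec x‖ ≤ supOpNorm A * ‖x‖ := by
  rw [supOpNorm_eq_opNorm]
  exact (LinearMap.toContinuousLinearMap (Matrix.toLin' A)).le_opNorm x

theorem supOpNorm_nonneg (A : Matrix (Fin n) (Fin n) ℝ) : 0 ≤ supOpNorm A := by
  rw [supOpNorm_eq_opNorm]
  exact norm_nonneg _

theorem norm_le_l2norm (x : Fin n → ℝ) : ‖x‖ ≤ l2norm x := by
  refine (pi_norm_le_iff_of_nonneg (Real.sqrt_nonneg _)).2 fun i => ?_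
  rw [Real.norm_eq_abs, ← Real.sqrt_sq_eq_abs]
  exact Real.sqrt_le_sqrt
    (Finset.single_le_sum (fun j _ => sq_nonneg (x j)) (Finset.mem_univ i))

end Norms

section Clamp

variable {n : ℕ}

theorem lipschitzWith_clamp1 : LipschitzWith 1 (clamp1 (n := n)) := by
  refine lipschitzWith_iff_norm_sub_le.2 fun x y => ?_
  rw [NNReal.coe_one, one_mul, pi_norm_le_iff_of_nonneg (norm_nonneg _)]
  intro i
  calc |min 1 (max (-1) (x i)) - min 1 (max (-1) (y i))|
      ≤ max |(1 : ℝ) - 1| |max (-1) (x i) - max (-1) (y i)| := abs_min_sub_min_le_max _ _ _ _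
    _ = |max (x i) (-1) - max (y i) (-1)| := by simp [max_comm]
    _ ≤ |x i - y i| := abs_max_sub_max_le_abs _ _ _
    _ ≤ ‖x - y‖ := norm_le_pi_norm (x - y) i

theorem norm_clamp1_le_one (x : Fin n → ℝ) : ‖clamp1 x‖ ≤ 1 :=
  (pi_norm_le_iff_of_nonneg zero_le_one).2 fun i =>
    abs_le.2 ⟨le_min (by norm_num) (le_max_left _ _), min_le_left _ _⟩

theorem clamp1_eq_self_of_norm_le_one {x : Fin n → ℝ} (hx : ‖x‖ ≤ 1) : clamp1 x = x := by
  funext i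
  obtain ⟨hlo, hhi⟩ := abs_le.1 ((norm_le_pi_norm x i).trans hx)
  simp only [clamp1, max_eq_right hlo, min_eq_right hhi]

theorem clamp1_eq_self_of_eq_clamp1 {L : (Fin n → ℝ) → Fin n → ℝ} {K : ℝ≥0}
    (hL : LipschitzWith K L) (hL0 : L 0 = 0) {g x : Fin n → ℝ} (hg : ‖g‖ ≤ 1 - K)
    (hx : x = clamp1 (L x + g)) : clamp1 (L x + g) = L x + g := by
  apply clamp1_eq_self_of_norm_le_one
  have hLx : ‖L x‖ ≤ K := by
    simpa [hL0] using (hL.norm_sub_le x 0).trans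
      (mul_le_of_le_one_right K.2 (by rw [sub_zero, hx]; exact norm_clamp1_le_one _))
  calc ‖L x + g‖ ≤ ‖L x‖ + ‖g‖ := norm_add_le _ _
    _ ≤ 1 := by linarith

end Clamp

theorem LipschitzWith.add_const {α E : Type*} [PseudoEMetricSpace α] [SeminormedAddCommGroup E]
    {K : ℝ≥0} {f : α → E} (hf : LipschitzWith K f) (c : E) :
    LipschitzWith K fun x => f x + c := by
  simpa [Function.comp_def] using (isometry_add_right c).lipschitz.comp hf

theorem lipschitzWith_smul_mulVec {n : ℕ} {A : Matrix (Fin n) (Fin n) ℝ} {Vu lam : ℝ}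
    (hVu : 0 < Vu) (hlam : 0 ≤ lam) (hA : supOpNorm A ≤ lam * Vu) :
    LipschitzWith ⟨lam, hlam⟩ fun x => (1 / Vu) • A.mulVec x := by
  refine lipschitzWith_iff_norm_sub_le.2 fun x y => ?_
  calc ‖(1 / Vu) • A.mulVec x - (1 / Vu) • A.mulVec y‖ = 1 / Vu * ‖A.mulVec (x - y)‖ := by
        rw [← smul_sub, ← Matrix.mulVec_sub, norm_smul, Real.norm_of_nonneg (by positivity)]
    _ ≤ 1 / Vu * (lam * Vu * ‖x - y‖) := by
        gcongr
        exact (norm_mulVec_le_supOpNorm_mul A _).trans (by gcongr)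
    _ = lam * ‖x - y‖ := by field_simp

theorem tendsto_zero_of_le_mul_add_s1 {K : ℝ} (hK0 : 0 ≤ K) (hK1 : K < 1) {a u : ℕ → ℝ}
    (ha : ∀ t, 0 ≤ a t) (hu : Tendsto u atTop (𝓝 0)) (hrec : ∀ t, a (t + 1) ≤ K * a t + u t) :
    Tendsto a atTop (𝓝 0) := by
  refine Metric.tendsto_atTop.2 fun ε hε => ?_
  obtain ⟨N, hN⟩ := eventually_atTop.1
    (hu.eventually (ge_mem_nhds (show (0 : ℝ) < (1 - K) * (ε / 2) by nlinarith)))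
  -- once `u ≤ (1 - K) ε / 2`, the excess of `a` over `ε / 2` contracts by `K` at each step
  have hgeom : ∀ m, a (N + m) ≤ K ^ m * a N + ε / 2 := by
    intro m
    induction m with
    | zero => simp only [add_zero, pow_zero, one_mul]; linarith
    | succ m ih =>
      calc a (N + (m + 1)) ≤ K * a (N + m) + u (N + m) := hrec (N + m)
        _ ≤ K * (K ^ m * a N + ε / 2) + (1 - K) * (ε / 2) := by
            gcongr
            exact hN _ (Nat.le_add_right N m)
        _ = K ^ (m + 1) * a N + ε / 2 := by ring
  have hpow : Tendsto (fun m => K ^ m * a N) atTop (𝓝 0) := by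
    simpa using (tendsto_pow_atTop_nhds_zero_of_lt_one hK0 hK1).mul_const (a N)
  obtain ⟨M, hM⟩ := eventually_atTop.1 (hpow.eventually (gt_mem_nhds (half_pos hε)))
  refine ⟨N + M, fun t ht => ?_⟩
  obtain ⟨m, rfl⟩ := Nat.exists_eq_add_of_le (le_trans (Nat.le_add_right N M) ht)
  rw [Real.dist_eq, sub_zero, abs_of_nonneg (ha _)]
  linarith [hgeom m, hM m (by omega)]

section Iteration

variable {E : Type*} [NormedAddCommGroup E] [NormedSpace ℝ E]

theorem norm_smul_sub_le {r : ℝ} (hr0 : 0 ≤ r) (hr1 : r ≤ 1) (a b : E) :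
    ‖r • a - b‖ ≤ ‖a - b‖ + (1 - r) * ‖b‖ := by
  calc ‖r • a - b‖ = ‖r • (a - b) - (1 - r) • b‖ := by
        rw [smul_sub, sub_smul, one_smul, sub_sub_sub_cancel_right]
    _ ≤ r * ‖a - b‖ + (1 - r) * ‖b‖ := by
        refine (norm_sub_le _ _).trans_eq ?_
        rw [norm_smul, norm_smul, Real.norm_of_nonneg hr0, Real.norm_of_nonneg (sub_nonneg.2 hr1)]
    _ ≤ ‖a - b‖ + (1 - r) * ‖b‖ := by
        gcongr
        exact mul_le_of_le_one_left (norm_nonneg _) hr1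

theorem norm_damped_step_sub_fixedPoint_le {φ L : E → E} {K : ℝ≥0} (hφ : LipschitzWith 1 φ)
    (hL : LipschitzWith K L) {g xstar : E} (hxstar : xstar = φ (L xstar + g)) {e : E} {C : ℝ}
    (he : ‖e‖ ≤ C) (t : ℕ) (x : E) :
    ‖φ (((t : ℝ) / ((t : ℝ) + 1)) • L x + g) - (1 / ((t : ℝ) + 1)) • e - xstar‖
      ≤ K * ‖x - xstar‖ + 1 / ((t : ℝ) + 1) * (‖L xstar‖ + C) := by
  set r : ℝ := (t : ℝ) / ((t : ℝ) + 1)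
  have hr0 : 0 ≤ r := by positivity
  have hr1 : r ≤ 1 := div_le_one_of_le₀ (by linarith) (by positivity)
  have h1r : 1 - r = 1 / ((t : ℝ) + 1) := by simp only [r]; field_simp; ring
  calc ‖φ (r • L x + g) - (1 / ((t : ℝ) + 1)) • e - xstar‖
      = ‖(φ (r • L x + g) - φ (L xstar + g)) - (1 / ((t : ℝ) + 1)) • e‖ := by
        rw [sub_right_comm, ← hxstar]
    _ ≤ ‖r • L x - L xstar‖ + 1 / ((t : ℝ) + 1) * C := by
        refine norm_sub_le_of_le ?_ ?_
        · simpa using hφ.norm_sub_le (r • L x + g) (L xstar + g)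
        · rw [norm_smul, Real.norm_of_nonneg (by positivity)]
          gcongr
    _ ≤ ‖L x - L xstar‖ + (1 - r) * ‖L xstar‖ + 1 / ((t : ℝ) + 1) * C := by
        gcongr
        exact norm_smul_sub_le hr0 hr1 _ _
    _ ≤ K * ‖x - xstar‖ + 1 / ((t : ℝ) + 1) * (‖L xstar‖ + C) := by
        rw [h1r]
        linarith [hL.norm_sub_le x xstar]

theorem tendsto_fixedPoint_of_damped_iteration {φ L : E → E} {K : ℝ≥0} (hφ : LipschitzWith 1 φ)
    (hL : LipschitzWith K L) (hK : K < 1) {g xstar : E} (hxstar : xstar = φ (L xstar + g))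
    {e : ℕ → E} {C : ℝ} (he : ∀ t, ‖e (t + 1)‖ ≤ C) {x : ℕ → E}
    (hx : ∀ t : ℕ, x (t + 1) =
      φ (((t : ℝ) / ((t : ℝ) + 1)) • L (x t) + g) - (1 / ((t : ℝ) + 1)) • e (t + 1)) :
    Tendsto x atTop (𝓝 xstar) := by
  have hrec : ∀ t : ℕ, ‖x (t + 1) - xstar‖
      ≤ K * ‖x t - xstar‖ + 1 / ((t : ℝ) + 1) * (‖L xstar‖ + C) := fun t => by
    rw [hx t]
    exact norm_damped_step_sub_fixedPoint_le hφ hL hxstar (he t) t (x t)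
  have hu : Tendsto (fun t : ℕ => 1 / ((t : ℝ) + 1) * (‖L xstar‖ + C)) atTop (𝓝 0) := by
    simpa using tendsto_one_div_add_atTop_nhds_zero_nat.mul_const (‖L xstar‖ + C)
  exact tendsto_iff_norm_sub_tendsto_zero.2
    (tendsto_zero_of_le_mul_add_s1 K.2 hK (fun t => norm_nonneg _) hu hrec)

end Iteration

theorem stmt1_general (n : ℕ) (Vu : ℝ) (hVu : 0 < Vu)
    (A : Matrix (Fin n) (Fin n) ℝ) (g : Fin n → ℝ) (e : ℕ → Fin n → ℝ)
    (he : ∃ C : ℝ, ∀ t : ℕ, 1 ≤ t → l2norm (e t) ≤ C)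
    (β : ℕ → Fin n → ℝ)
    (hβ : ∀ t : ℕ, β (t + 1) =
      clamp1 (((t : ℝ) / ((t : ℝ) + 1)) • ((1 / Vu) • A.mulVec (β t)) + g)
        - (1 / ((t : ℝ) + 1)) • e (t + 1))
    (lam : ℝ) (hlam : lam < 1)
    (hAinf : supOpNorm A ≤ lam * Vu) (hginf : supNorm g ≤ 1 - lam) :
    ∃ βstar : Fin n → ℝ, Tendsto β atTop (𝓝 βstar) ∧
      βstar = clamp1 ((1 / Vu) • A.mulVec βstar + g) ∧
      βstar = (1 / Vu) • A.mulVec βstar + g ∧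
      ∀ y : Fin n → ℝ, y = (1 / Vu) • A.mulVec y + g → y = βstar := by
  have hlam0 : 0 ≤ lam := nonneg_of_mul_nonneg_left ((supOpNorm_nonneg A).trans hAinf) hVu
  have hL := lipschitzWith_smul_mulVec hVu hlam0 hAinf
  have hK : (⟨lam, hlam0⟩ : ℝ≥0) < 1 := hlam
  have hT : ContractingWith ⟨lam, hlam0⟩ fun x => clamp1 ((1 / Vu) • A.mulVec x + g) :=
    ⟨hK, (lipschitzWith_clamp1.comp (hL.add_const g)).weaken (one_mul _).le⟩
  have hfix : hT.fixedPoint = clamp1 ((1 / Vu) • A.mulVec hT.fixedPoint + g) :=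
    hT.fixedPoint_isFixedPt.symm
  have hlin : hT.fixedPoint = (1 / Vu) • A.mulVec hT.fixedPoint + g :=
    hfix.trans (clamp1_eq_self_of_eq_clamp1 hL (by simp) (by rwa [← supNorm_eq_norm]) hfix)
  obtain ⟨C, hC⟩ := he
  refine ⟨hT.fixedPoint, ?_, hfix, hlin, fun y hy => ?_⟩
  · exact tendsto_fixedPoint_of_damped_iteration lipschitzWith_clamp1 hL hK hfix
      (fun t => (norm_le_l2norm _).trans (hC (t + 1) (Nat.le_add_left 1 t))) hβ
  · have hS : ContractingWith ⟨lam, hlam0⟩ fun x => (1 / Vu) • A.mulVec x + g :=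
      ⟨hK, hL.add_const g⟩
    exact hS.fixedPoint_unique' hy.symm hlin.symm

theorem stmt1 (n : ℕ) (hn : 0 < n) (Vu : ℝ) (hVu : 0 < Vu)
    (A : Matrix (Fin n) (Fin n) ℝ) (g : Fin n → ℝ) (e : ℕ → Fin n → ℝ)
    (he : ∃ C : ℝ, ∀ t : ℕ, 1 ≤ t → l2norm (e t) ≤ C)
    (β : ℕ → Fin n → ℝ) (hβ0 : β 0 = 0)
    (hβ : ∀ t : ℕ, β (t + 1) =
      clamp1 (((t : ℝ) / ((t : ℝ) + 1)) • ((1 / Vu) • A.mulVec (β t)) + g)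
        - (1 / ((t : ℝ) + 1)) • e (t + 1))
    (hA2 : ∃ γ : ℝ, γ < 1 ∧ l2OpNorm A ≤ γ * Vu)
    (lam : ℝ) (hlam : lam < 1)
    (hAinf : supOpNorm A ≤ lam * Vu) (hginf : supNorm g ≤ 1 - lam) :
    ∃ βstar : Fin n → ℝ, Tendsto β atTop (𝓝 βstar) ∧
      βstar = clamp1 ((1 / Vu) • A.mulVec βstar + g) ∧
      βstar = (1 / Vu) • A.mulVec βstar + g ∧
      ∀ y : Fin n → ℝ, y = (1 / Vu) • A.mulVec y + g → y = βstar :=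
  stmt1_general n Vu hVu A g e he β hβ lam hlam hAinf hginf
end

section
/- Let V_th > 0 and u_reset ∈ ℝ with V_th − u_reset > 0, and let (x[t])_{t≥1} be any sequence of real inputs. Define the ternary neuron dynamics: u[0] = 0, and for t ≥ 0, v[t+1] = u[t] + x[t+1], s[t+1] = 1 if v[t+1] > V_th, s[t+1] = −1 if v[t+1] < −V_th, s[t+1] = 0 otherwise, u[t+1] = v[t+1] − (V_th − u_reset)·s[t+1]. Define the coupled-neuron dynamics: u_1[0] = u_2[0] = 0, and for t ≥ 0, v_1[t+1] = u_1[t] + x[t+1], v_2[t+1] = u_2[t] − x[t+1], s_1[t+1] = 1 if v_1[t+1] > V_th and 0 otherwise, s_2[t+1] = 1 if v_2[t+1] > V_th and 0 otherwise, u_1[t+1] = v_1[t+1] − (V_th − u_reset)·(s_1[t+1] − s_2[t+1]), u_2[t+1] = v_2[t+1] − (V_th − u_reset)·(s_2[t+1] − s_1[t+1]). Then for all t ≥ 0: u_2[t] = −u_1[t], s_1[t]·s_2[t] = 0 (the two neurons never fire simultaneously), u_1[t] = u[t], and s_1[t] − s_2[t] = s[t]. -/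
/-!
By induction on `t`, with the invariant `u₁ = u` and `u₂ = -u₁`: the second neuron then sees
`v₂ = -v₁ = -v`, so it fires exactly when `v < -V_th` while the first fires exactly when
`V_th < v`. For `V_th ≥ 0` these events are exclusive and the difference of the two binary
spikes is the ternary spike of `v`; the cross-coupled resets then reproduce the ternary reset
and keep the two potentials opposite.
-/

noncomputable def binarySpike (θ v : ℝ) : ℝ := if θ < v then 1 else 0

noncomputable def ternarySpike (θ v : ℝ) : ℝ := if θ < v then 1 else if v < -θ then -1 else 0

lemma binarySpike_mul_binarySpike_neg {θ : ℝ} (hθ : 0 ≤ θ) (v : ℝ) :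
    binarySpike θ v * binarySpike θ (-v) = 0 := by
  unfold binarySpike
  split_ifs <;> linarith

lemma binarySpike_sub_binarySpike_neg {θ : ℝ} (hθ : 0 ≤ θ) (v : ℝ) :
    binarySpike θ v - binarySpike θ (-v) = ternarySpike θ v := by
  unfold binarySpike ternarySpike
  split_ifs <;> linarith

theorem stmt17_general (Vth ureset : ℝ) (hVth : 0 < Vth)
    (x : ℕ → ℝ)
    (u v s : ℕ → ℝ)
    (hu0 : u 0 = 0) (hs0 : s 0 = 0)
    (hv : ∀ t : ℕ, v (t + 1) = u t + x (t + 1))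
    (hs : ∀ t : ℕ, s (t + 1) =
      if Vth < v (t + 1) then (1 : ℝ) else if v (t + 1) < -Vth then -1 else 0)
    (hu : ∀ t : ℕ, u (t + 1) = v (t + 1) - (Vth - ureset) * s (t + 1))
    (u1 u2 v1 v2 s1 s2 : ℕ → ℝ)
    (hu10 : u1 0 = 0) (hu20 : u2 0 = 0) (hs10 : s1 0 = 0) (hs20 : s2 0 = 0)
    (hv1 : ∀ t : ℕ, v1 (t + 1) = u1 t + x (t + 1))
    (hv2 : ∀ t : ℕ, v2 (t + 1) = u2 t - x (t + 1))
    (hs1 : ∀ t : ℕ, s1 (t + 1) = if Vth < v1 (t + 1) then (1 : ℝ) else 0)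
    (hs2 : ∀ t : ℕ, s2 (t + 1) = if Vth < v2 (t + 1) then (1 : ℝ) else 0)
    (hu1 : ∀ t : ℕ, u1 (t + 1) = v1 (t + 1) - (Vth - ureset) * (s1 (t + 1) - s2 (t + 1)))
    (hu2 : ∀ t : ℕ, u2 (t + 1) = v2 (t + 1) - (Vth - ureset) * (s2 (t + 1) - s1 (t + 1))) :
    ∀ t : ℕ, u2 t = -u1 t ∧ s1 t * s2 t = 0 ∧ u1 t = u t ∧ s1 t - s2 t = s t := by
  intro t
  induction t with
  | zero => simp [hu0, hs0, hu10, hu20, hs10, hs20]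
  | succ t ih =>
    obtain ⟨hu2t, -, hu1t, -⟩ := ih
    have hv1v : v1 (t + 1) = v (t + 1) := by rw [hv1, hv, hu1t]
    have hv2v : v2 (t + 1) = -v (t + 1) := by rw [hv2, hv, hu2t, hu1t]; ring
    have hs1v : s1 (t + 1) = binarySpike Vth (v (t + 1)) := by rw [hs1, hv1v]; rfl
    have hs2v : s2 (t + 1) = binarySpike Vth (-v (t + 1)) := by rw [hs2, hv2v]; rfl
    have hsv : s1 (t + 1) - s2 (t + 1) = s (t + 1) := by
      rw [hs1v, hs2v, binarySpike_sub_binarySpike_neg hVth.le, hs]; rfl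
    refine ⟨?_, ?_, ?_, hsv⟩
    · rw [hu2, hu1, hv1v, hv2v]; ring
    · rw [hs1v, hs2v]; exact binarySpike_mul_binarySpike_neg hVth.le _
    · rw [hu1, hu, hv1v, hsv]

/-- A ternary spiking neuron (symmetric thresholds `±V_th`, output in `{−1, 0, 1}`,
subtraction reset with gap `V_th − u_reset`) is exactly realized by two coupled common
integrate-and-fire neurons receiving opposite inputs, each of whose spikes also resets the
other: the membrane potentials agree (`u₁ = u`, `u₂ = −u₁`), the two neurons never fire
simultaneously, and the couple's output `s₁ − s₂` equals the ternary output `s`. -/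
theorem stmt17 (Vth ureset : ℝ) (hVth : 0 < Vth) (hgap : 0 < Vth - ureset)
    (x : ℕ → ℝ)
    (u v s : ℕ → ℝ)
    (hu0 : u 0 = 0) (hs0 : s 0 = 0)
    (hv : ∀ t : ℕ, v (t + 1) = u t + x (t + 1))
    (hs : ∀ t : ℕ, s (t + 1) =
      if Vth < v (t + 1) then (1 : ℝ) else if v (t + 1) < -Vth then -1 else 0)
    (hu : ∀ t : ℕ, u (t + 1) = v (t + 1) - (Vth - ureset) * s (t + 1))
    (u1 u2 v1 v2 s1 s2 : ℕ → ℝ)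
    (hu10 : u1 0 = 0) (hu20 : u2 0 = 0) (hs10 : s1 0 = 0) (hs20 : s2 0 = 0)
    (hv1 : ∀ t : ℕ, v1 (t + 1) = u1 t + x (t + 1))
    (hv2 : ∀ t : ℕ, v2 (t + 1) = u2 t - x (t + 1))
    (hs1 : ∀ t : ℕ, s1 (t + 1) = if Vth < v1 (t + 1) then (1 : ℝ) else 0)
    (hs2 : ∀ t : ℕ, s2 (t + 1) = if Vth < v2 (t + 1) then (1 : ℝ) else 0)
    (hu1 : ∀ t : ℕ, u1 (t + 1) = v1 (t + 1) - (Vth - ureset) * (s1 (t + 1) - s2 (t + 1)))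
    (hu2 : ∀ t : ℕ, u2 (t + 1) = v2 (t + 1) - (Vth - ureset) * (s2 (t + 1) - s1 (t + 1))) :
    ∀ t : ℕ, u2 t = -u1 t ∧ s1 t * s2 t = 0 ∧ u1 t = u t ∧ s1 t - s2 t = s t :=
  stmt17_general Vth ureset hVth x u v s hu0 hs0 hv hs hu u1 u2 v1 v2 s1 s2 hu10 hu20 hs10 hs20 hv1
    hv2 hs1 hs2 hu1 hu2
end
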